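/- arXiv:0811.0948 — 4 statements merged into one kernel-verified Lean document; each statement's English description precedes it below -/
import Mathlib

section
/- Let 0 < p < 1 and 0 < q < 1, and let f, g : ℕ₊ → ℝ satisfy f(i)/i^{p−1} → 1 and g(i)/i^{q−1} → 1 as i → ∞. Then lim_{j→∞} j^{1−p−q} ∑_{i=1}^{j−1} f(i) g(j−i) = B(p, q). -/
open Filter Topology intervalIntegral MeasureTheory

/-- The Beta function `B(a,b) = Γ(a)Γ(b)/Γ(a+b)`. -/
noncomputable def betaFn (a b : ℝ) : ℝ := Real.Gamma a * Real.Gamma b / Real.Gamma (a + b)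

lemma beta_integral_eq (p q : ℝ) (hp : 0 < p) (hq : 0 < q) :
    ∫ x in (0:ℝ)..1, x ^ (p - 1) * (1 - x) ^ (q - 1) = betaFn p q := by
  have h := Complex.Gamma_mul_Gamma_eq_betaIntegral (s := p) (t := q) (by simpa using hp) (by simpa using hq)
  have hci : Complex.betaIntegral p q =
      ((∫ x in (0:ℝ)..1, x ^ (p - 1) * (1 - x) ^ (q - 1) : ℝ) : ℂ) := by
    rw [Complex.betaIntegral, ← intervalIntegral.integral_ofReal]
    refine intervalIntegral.integral_congr fun x hx => ?_
    rw [Set.uIcc_of_le (by norm_num)] at hx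
    rw [Complex.ofReal_mul, Complex.ofReal_cpow hx.1, Complex.ofReal_cpow (by linarith [hx.2])]
    push_cast
    ring
  rw [hci, show ((p:ℂ) + q) = ((p + q : ℝ) : ℂ) by push_cast; ring,
    Complex.Gamma_ofReal, Complex.Gamma_ofReal, Complex.Gamma_ofReal] at h
  have hne : Real.Gamma (p + q) ≠ 0 := (Real.Gamma_pos_of_pos (by linarith)).ne'
  have h2 : Real.Gamma p * Real.Gamma q
      = Real.Gamma (p + q) * ∫ x in (0:ℝ)..1, x ^ (p - 1) * (1 - x) ^ (q - 1) := by
    exact_mod_cast h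
  rw [betaFn, h2]
  field_simp

lemma bound_of_tendsto (r : ℝ) (f : ℕ → ℝ)
    (hf : Tendsto (fun i : ℕ => f i / (i : ℝ) ^ r) atTop (𝓝 1)) :
    ∃ C : ℝ, 0 ≤ C ∧ ∀ i : ℕ, 1 ≤ i → |f i| ≤ C * (i : ℝ) ^ r := by
  have habs : Tendsto (fun i : ℕ => |f i / (i : ℝ) ^ r|) atTop (𝓝 |1|) := hf.abs
  obtain ⟨C, hC⟩ := habs.bddAbove_range
  refine ⟨max C 0, le_max_right _ _, fun i hi => ?_⟩
  have hpos : (0:ℝ) < (i:ℝ) ^ r :=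
    Real.rpow_pos_of_pos (by exact_mod_cast Nat.lt_of_lt_of_le Nat.zero_lt_one hi) r
  have h1 : |f i / (i : ℝ) ^ r| ≤ C := hC (Set.mem_range_self i)
  rw [abs_div, abs_of_pos hpos] at h1
  calc |f i| = (|f i| / (i:ℝ)^r) * (i:ℝ)^r := by field_simp
    _ ≤ max C 0 * (i:ℝ)^r := by
        apply mul_le_mul_of_nonneg_right _ hpos.le
        exact h1.trans (le_max_left _ _)

lemma half_rpow (r : ℝ) : (1/2 : ℝ) ^ r = (2:ℝ) ^ (-r) := by
  rw [one_div, Real.inv_rpow (by norm_num), ← Real.rpow_neg (by norm_num)]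

lemma integrable_kernel (p q : ℝ) (hp : 0 < p) (hp1 : p < 1) (hq : 0 < q) (hq1 : q < 1) :
    IntervalIntegrable (fun x : ℝ => x ^ (p - 1) * (1 - x) ^ (q - 1)) volume 0 1 := by
  have hmeas : ∀ a b : ℝ, AEStronglyMeasurable (fun x : ℝ => x ^ (p - 1) * (1 - x) ^ (q - 1))
      (volume.restrict (Set.uIoc a b)) := fun a b =>
    (Measurable.aestronglyMeasurable (by fun_prop))
  have h1 : IntervalIntegrable (fun x : ℝ => x ^ (p - 1) * (1 - x) ^ (q - 1)) volume 0 (1/2) := by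
    refine IntervalIntegrable.mono_fun
      ((intervalIntegrable_rpow' (r := p - 1) (by linarith)).const_mul ((2:ℝ) ^ (1 - q)))
      (hmeas 0 (1/2)) ?_
    filter_upwards [ae_restrict_mem measurableSet_uIoc] with x hx
    rw [Set.uIoc_of_le (by norm_num)] at hx
    obtain ⟨hx0, hx1⟩ := hx
    have h1x : (0:ℝ) < 1 - x := by linarith
    rw [Real.norm_eq_abs, Real.norm_eq_abs, abs_of_nonneg (by positivity),
      abs_of_nonneg (by positivity)]
    have hb : (1 - x) ^ (q - 1) ≤ (2:ℝ) ^ (1 - q) := by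
      calc (1 - x) ^ (q - 1) ≤ (1/2 : ℝ) ^ (q - 1) :=
            Real.rpow_le_rpow_of_nonpos (by norm_num) (by linarith) (by linarith)
        _ = (2:ℝ) ^ (1 - q) := by rw [half_rpow]; ring_nf
    calc x ^ (p-1) * (1-x) ^ (q-1) ≤ x ^ (p-1) * (2:ℝ) ^ (1-q) :=
          mul_le_mul_of_nonneg_left hb (by positivity)
      _ = (2:ℝ) ^ (1-q) * x ^ (p-1) := by ring
  have h2 : IntervalIntegrable (fun x : ℝ => x ^ (p - 1) * (1 - x) ^ (q - 1)) volume (1/2) 1 := by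
    have base : IntervalIntegrable (fun x : ℝ => (1 - x) ^ (q - 1)) volume (1/2) 1 := by
      have h := ((intervalIntegrable_rpow' (r := q - 1) (a := 0) (b := 1/2)
        (by linarith)).comp_sub_left 1).symm
      norm_num at h
      exact h
    refine IntervalIntegrable.mono_fun (base.const_mul ((2:ℝ) ^ (1 - p))) (hmeas _ _) ?_
    filter_upwards [ae_restrict_mem measurableSet_uIoc] with x hx
    rw [Set.uIoc_of_le (by norm_num)] at hx
    obtain ⟨hx0, hx1⟩ := hx
    have hx0' : (0:ℝ) < x := by linarith
    have h1x : (0:ℝ) ≤ 1 - x := by linarith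
    rw [Real.norm_eq_abs, Real.norm_eq_abs, abs_of_nonneg (by positivity),
      abs_of_nonneg (by positivity)]
    have hb : x ^ (p - 1) ≤ (2:ℝ) ^ (1 - p) := by
      calc x ^ (p - 1) ≤ (1/2 : ℝ) ^ (p - 1) :=
            Real.rpow_le_rpow_of_nonpos (by norm_num) (by linarith) (by linarith)
        _ = (2:ℝ) ^ (1 - p) := by rw [half_rpow]; ring_nf
    exact mul_le_mul_of_nonneg_right hb (by positivity)
  exact h1.trans h2

lemma sum_eq_integral (p q : ℝ) (f g : ℕ → ℝ) (j : ℕ) (hj : 1 ≤ j) :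
    (j:ℝ) ^ (1 - p - q) * ∑ i ∈ Finset.Ico 1 j, f i * g (j - i)
      = ∫ x in (0:ℝ)..1, (j:ℝ) ^ (2 - p - q) *
          (if ⌈(j:ℝ) * x⌉₊ < j then f ⌈(j:ℝ)*x⌉₊ * g (j - ⌈(j:ℝ)*x⌉₊) else 0) := by
  set F : ℕ → ℝ := fun i => if i < j then f i * g (j - i) else 0 with hFdef
  have hj0 : (0:ℝ) < j := by exact_mod_cast hj
  set a : ℕ → ℝ := fun k => k / j with hadef
  have hle : ∀ k : ℕ, a k ≤ a (k + 1) := by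
    intro k
    simp only [hadef]
    gcongr
    omega
  have hceil : ∀ k : ℕ, ∀ x ∈ Set.Ioo (a k) (a (k+1)), ⌈(j:ℝ) * x⌉₊ = k + 1 := by
    intro k x hx
    obtain ⟨hxl, hxr⟩ := hx
    rw [Nat.ceil_eq_iff (Nat.succ_ne_zero k)]
    constructor
    · simpa using (div_lt_iff₀ hj0).mp hxl |>.trans_eq (mul_comm x _)
    · push_cast
      have := (lt_div_iff₀ hj0).mp hxr
      push_cast at this
      linarith [this]
  have hpiece : ∀ k : ℕ, ∫ x in a k..a (k+1), ((j:ℝ) ^ (2 - p - q) * F ⌈(j:ℝ)*x⌉₊)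
      = (j:ℝ) ^ (2 - p - q) * F (k+1) * (1/j) := by
    intro k
    rw [intervalIntegral.integral_of_le (hle k), MeasureTheory.integral_Ioc_eq_integral_Ioo,
      MeasureTheory.setIntegral_congr_fun measurableSet_Ioo
        (g := fun _ => (j:ℝ) ^ (2 - p - q) * F (k+1)) (fun x hx => by rw [hceil k x hx]),
      MeasureTheory.setIntegral_const, measureReal_def, Real.volume_Ioo]
    have hvol : a (k+1) - a k = 1 / j := by
      simp only [hadef]; push_cast; field_simp; ring
    rw [hvol, ENNReal.toReal_ofReal (by positivity), smul_eq_mul]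
    ring
  have hint : ∀ k : ℕ, k < j → IntervalIntegrable
      (fun x => (j:ℝ) ^ (2 - p - q) * F ⌈(j:ℝ)*x⌉₊) volume (a k) (a (k+1)) := by
    intro k _
    rw [intervalIntegrable_iff_integrableOn_Ioc_of_le (hle k),
      integrableOn_Ioc_iff_integrableOn_Ioo]
    refine MeasureTheory.IntegrableOn.congr_fun ?_ (fun x hx => by rw [hceil k x hx])
      measurableSet_Ioo
    exact integrableOn_const measure_Ioo_lt_top.ne
  have hadj := intervalIntegral.sum_integral_adjacent_intervals (μ := volume)
      (f := fun x => (j:ℝ) ^ (2 - p - q) * F ⌈(j:ℝ)*x⌉₊) (n := j) hint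
  have ha0 : a 0 = 0 := by simp [hadef]
  have haj : a j = 1 := by simp only [hadef]; exact div_self hj0.ne'
  rw [ha0, haj] at hadj
  rw [← hadj]
  have hterm : ∀ k : ℕ, (j:ℝ) ^ (2 - p - q) * F (k+1) * (1/j)
      = (j:ℝ) ^ (1 - p - q) * F (k+1) := by
    intro k
    rw [show (2 - p - q) = (1 - p - q) + 1 by ring, Real.rpow_add_one hj0.ne']
    field_simp
  calc (j:ℝ) ^ (1 - p - q) * ∑ i ∈ Finset.Ico 1 j, f i * g (j - i)
      = (j:ℝ) ^ (1 - p - q) * ∑ k ∈ Finset.range j, F (k+1) := by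
        congr 1
        have h1 : ∑ i ∈ Finset.Ico 1 (j+1), F i = ∑ k ∈ Finset.range j, F (1+k) := by
          rw [Finset.sum_Ico_eq_sum_range]; simp
        have h2 : ∑ i ∈ Finset.Ico 1 (j+1), F i = (∑ i ∈ Finset.Ico 1 j, F i) + F j :=
          Finset.sum_Ico_succ_top hj F
        have h3 : F j = 0 := by simp [hFdef]
        have h4 : ∑ i ∈ Finset.Ico 1 j, F i = ∑ i ∈ Finset.Ico 1 j, f i * g (j - i) := by
          refine Finset.sum_congr rfl fun i hi => ?_
          rw [Finset.mem_Ico] at hi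
          simp [hFdef, hi.2]
        rw [h4.symm, ← add_zero (∑ i ∈ Finset.Ico 1 j, F i), ← h3, ← h2, h1]
        exact Finset.sum_congr rfl fun k _ => by rw [add_comm]
    _ = ∑ k ∈ Finset.range j, (j:ℝ) ^ (2 - p - q) * F (k+1) * (1/j) := by
        rw [Finset.mul_sum]
        exact Finset.sum_congr rfl fun k _ => (hterm k).symm
    _ = ∑ k ∈ Finset.range j, ∫ x in a k..a (k+1), ((j:ℝ) ^ (2 - p - q) * F ⌈(j:ℝ)*x⌉₊) := by
        exact Finset.sum_congr rfl fun k _ => (hpiece k).symm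

lemma rpow_split (p q : ℝ) {j i : ℕ} (h1 : 1 ≤ i) (h2 : i < j) :
    (j:ℝ) ^ (2 - p - q) * ((i:ℝ) ^ (p-1) * (((j - i : ℕ)):ℝ) ^ (q-1))
      = ((i:ℝ) / j) ^ (p-1) * ((((j - i : ℕ)):ℝ) / j) ^ (q-1) := by
  have hj0 : (0:ℝ) < j := by have : 0 < j := by omega
                             exact_mod_cast this
  have hi0 : (0:ℝ) ≤ i := Nat.cast_nonneg i
  have hb0 : (0:ℝ) ≤ ((j - i : ℕ):ℝ) := Nat.cast_nonneg _
  rw [Real.div_rpow hi0 hj0.le, Real.div_rpow hb0 hj0.le]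
  have hne1 : (j:ℝ) ^ (p-1) ≠ 0 := (Real.rpow_pos_of_pos hj0 _).ne'
  have hne2 : (j:ℝ) ^ (q-1) ≠ 0 := (Real.rpow_pos_of_pos hj0 _).ne'
  have e : (j:ℝ) ^ (2-p-q) * ((j:ℝ) ^ (p-1) * (j:ℝ) ^ (q-1)) = 1 := by
    rw [← Real.rpow_add hj0, ← Real.rpow_add hj0,
      show 2 - p - q + (p - 1 + (q - 1)) = 0 by ring, Real.rpow_zero]
  rw [div_mul_div_comm, eq_div_iff (mul_ne_zero hne1 hne2)]
  linear_combination ((i:ℝ)^(p-1) * ((j-i:ℕ):ℝ)^(q-1)) * e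

lemma step_bound (p q : ℝ) (hp1 : p < 1) (hq1 : q < 1) (f g : ℕ → ℝ) (Cf Cg : ℝ)
    (hCf0 : 0 ≤ Cf) (hCg0 : 0 ≤ Cg)
    (hCf : ∀ i : ℕ, 1 ≤ i → |f i| ≤ Cf * (i:ℝ) ^ (p-1))
    (hCg : ∀ i : ℕ, 1 ≤ i → |g i| ≤ Cg * (i:ℝ) ^ (q-1))
    (j : ℕ) {x : ℝ} (hx0 : 0 < x) (hx1 : x ≤ 1) :
    ‖(j:ℝ) ^ (2 - p - q) *
        (if ⌈(j:ℝ)*x⌉₊ < j then f ⌈(j:ℝ)*x⌉₊ * g (j - ⌈(j:ℝ)*x⌉₊) else 0)‖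
      ≤ (Cf * Cg * 2 ^ (1-q)) * (x ^ (p-1) * (1-x) ^ (q-1)) := by
  have h1x : (0:ℝ) ≤ 1 - x := by linarith
  by_cases hcase : ⌈(j:ℝ)*x⌉₊ < j
  swap
  · rw [if_neg hcase, mul_zero, norm_zero]
    positivity
  rw [if_pos hcase]
  set i := ⌈(j:ℝ)*x⌉₊ with hidef
  have hj1 : 1 ≤ j := by omega
  have hj0 : (0:ℝ) < j := by exact_mod_cast hj1
  have hi1 : 1 ≤ i := Nat.ceil_pos.mpr (by positivity)
  have hb1 : 1 ≤ j - i := by omega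
  have hcast : ((j - i : ℕ) : ℝ) = (j:ℝ) - i := by
    rw [Nat.cast_sub hcase.le]
  have hjx_le : (j:ℝ) * x ≤ i := Nat.le_ceil _
  have hi_lt : (i:ℝ) < (j:ℝ) * x + 1 := Nat.ceil_lt_add_one (by positivity)
  have hxi : x ≤ (i:ℝ) / j := (le_div_iff₀ hj0).mpr (by linarith [hjx_le])
  have hxlt1 : x < 1 := by
    have hij : (i:ℝ) ≤ (j:ℝ) - 1 := by
      have : (i:ℝ) + 1 ≤ j := by exact_mod_cast Nat.succ_le_of_lt hcase
      linarith
    by_contra hc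
    push_neg at hc
    have : (j:ℝ) * x ≥ j := by nlinarith
    linarith [hjx_le, hij]
  have hbx : (1 - x) / 2 ≤ ((j - i : ℕ):ℝ) / j := by
    rw [hcast, div_le_div_iff₀ (by norm_num) hj0]
    have hb1' : (1:ℝ) ≤ (j:ℝ) - i := by
      rw [← hcast]; exact_mod_cast hb1
    nlinarith [hi_lt]
  rw [norm_mul, Real.norm_eq_abs, Real.norm_eq_abs, abs_mul,
    abs_of_nonneg (Real.rpow_nonneg hj0.le _)]
  have hfb := hCf i hi1
  have hgb := hCg (j - i) hb1
  have step1 : (j:ℝ) ^ (2-p-q) * (|f i| * |g (j - i)|)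
      ≤ (j:ℝ) ^ (2-p-q) * ((Cf * (i:ℝ) ^ (p-1)) * (Cg * ((j-i:ℕ):ℝ) ^ (q-1))) := by
    apply mul_le_mul_of_nonneg_left _ (Real.rpow_nonneg hj0.le _)
    exact mul_le_mul hfb hgb (abs_nonneg _) (by positivity)
  have step2 : (j:ℝ) ^ (2-p-q) * ((Cf * (i:ℝ) ^ (p-1)) * (Cg * ((j-i:ℕ):ℝ) ^ (q-1)))
      = (Cf * Cg) * (((i:ℝ)/j) ^ (p-1) * (((j-i:ℕ):ℝ)/j) ^ (q-1)) := by
    rw [← rpow_split p q hi1 hcase]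
    ring
  have hratio1 : ((i:ℝ)/j) ^ (p-1) ≤ x ^ (p-1) :=
    Real.rpow_le_rpow_of_nonpos hx0 hxi (by linarith)
  have hratio2 : (((j-i:ℕ):ℝ)/j) ^ (q-1) ≤ 2 ^ (1-q) * (1-x) ^ (q-1) := by
    have h2 : (((j-i:ℕ):ℝ)/j) ^ (q-1) ≤ ((1-x)/2) ^ (q-1) :=
      Real.rpow_le_rpow_of_nonpos (by linarith) hbx (by linarith)
    refine h2.trans_eq ?_
    rw [Real.div_rpow (by linarith) (by norm_num)]
    rw [div_eq_mul_inv, ← Real.rpow_neg (by norm_num : (0:ℝ) ≤ 2),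
      show -(q-1) = 1 - q by ring]
    ring
  have step3 : ((i:ℝ)/j) ^ (p-1) * (((j-i:ℕ):ℝ)/j) ^ (q-1)
      ≤ x ^ (p-1) * (2 ^ (1-q) * (1-x) ^ (q-1)) := by
    apply mul_le_mul hratio1 hratio2 (Real.rpow_nonneg (by positivity) _)
      (Real.rpow_nonneg hx0.le _)
  calc (j:ℝ) ^ (2-p-q) * (|f i| * |g (j - i)|)
      ≤ (Cf * Cg) * (((i:ℝ)/j) ^ (p-1) * (((j-i:ℕ):ℝ)/j) ^ (q-1)) := step1.trans_eq step2
    _ ≤ (Cf * Cg) * (x ^ (p-1) * (2 ^ (1-q) * (1-x) ^ (q-1))) :=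
        mul_le_mul_of_nonneg_left step3 (by positivity)
    _ = (Cf * Cg * 2 ^ (1-q)) * (x ^ (p-1) * (1-x) ^ (q-1)) := by ring

lemma step_tendsto (p q : ℝ) (f g : ℕ → ℝ)
    (hf : Tendsto (fun i : ℕ => f i / (i : ℝ) ^ (p - 1)) atTop (𝓝 1))
    (hg : Tendsto (fun i : ℕ => g i / (i : ℝ) ^ (q - 1)) atTop (𝓝 1))
    {x : ℝ} (hx0 : 0 < x) (hx1 : x < 1) :
    Tendsto (fun j : ℕ => (j:ℝ) ^ (2 - p - q) *
        (if ⌈(j:ℝ)*x⌉₊ < j then f ⌈(j:ℝ)*x⌉₊ * g (j - ⌈(j:ℝ)*x⌉₊) else 0))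
      atTop (𝓝 (x ^ (p-1) * (1-x) ^ (q-1))) := by
  set I : ℕ → ℕ := fun j => ⌈(j:ℝ)*x⌉₊ with hIdef
  have hjx : Tendsto (fun j : ℕ => (j:ℝ)*x) atTop atTop :=
    (tendsto_natCast_atTop_atTop).atTop_mul_const hx0
  have hI_top : Tendsto I atTop atTop := by
    rw [tendsto_atTop_atTop]
    intro b
    obtain ⟨N, hN⟩ := tendsto_atTop_atTop.mp hjx b
    exact ⟨N, fun j hj => by exact_mod_cast (hN j hj).trans (Nat.le_ceil _)⟩
  have hJI_top : Tendsto (fun j => j - I j) atTop atTop := by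
    rw [tendsto_atTop_atTop]
    intro b
    have h2 : Tendsto (fun j : ℕ => (j:ℝ)*(1-x)) atTop atTop :=
      (tendsto_natCast_atTop_atTop).atTop_mul_const (by linarith)
    obtain ⟨N, hN⟩ := tendsto_atTop_atTop.mp h2 (b+1)
    refine ⟨N, fun j hj => ?_⟩
    have h3 : (I j : ℝ) < (j:ℝ)*x + 1 := Nat.ceil_lt_add_one (by positivity)
    have h4 := hN j hj
    have h5 : I j + b ≤ j := by
      have : ((I j + b : ℕ):ℝ) ≤ (j:ℝ) := by push_cast; nlinarith
      exact_mod_cast this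
    omega
  have hev : ∀ᶠ j in atTop, 1 ≤ I j ∧ I j < j := by
    filter_upwards [hI_top.eventually_ge_atTop 1, hJI_top.eventually_ge_atTop 1] with j h1 h2
    exact ⟨h1, by omega⟩
  have hratio : Tendsto (fun j : ℕ => (I j : ℝ)/j) atTop (𝓝 x) := by
    have hup : Tendsto (fun j : ℕ => x + 1/(j:ℝ)) atTop (𝓝 x) := by
      simpa using (tendsto_const_nhds (x := x)).add (tendsto_one_div_atTop_nhds_zero_nat (𝕜 := ℝ))
    refine tendsto_of_tendsto_of_tendsto_of_le_of_le' tendsto_const_nhds hup ?_ ?_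
    · filter_upwards [eventually_ge_atTop 1] with j hj
      have hj0 : (0:ℝ) < j := by exact_mod_cast hj
      exact (le_div_iff₀ hj0).mpr (by linarith [Nat.le_ceil ((j:ℝ)*x)])
    · filter_upwards [eventually_ge_atTop 1] with j hj
      have hj0 : (0:ℝ) < j := by exact_mod_cast hj
      have h3 : (I j : ℝ) < (j:ℝ)*x + 1 := Nat.ceil_lt_add_one (by positivity)
      rw [div_le_iff₀ hj0]
      have : (x + 1/(j:ℝ)) * j = (j:ℝ)*x + 1 := by field_simp
      linarith [this]
  have hratio2 : Tendsto (fun j : ℕ => ((j - I j : ℕ) : ℝ)/j) atTop (𝓝 (1-x)) := by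
    refine (tendsto_const_nhds.sub hratio).congr' ?_
    filter_upwards [hev, eventually_ge_atTop 1] with j hj hj1
    have hj0 : (0:ℝ) < j := by exact_mod_cast hj1
    rw [Nat.cast_sub hj.2.le, sub_div, div_self hj0.ne']
  have hA : Tendsto (fun j : ℕ => f (I j) / (I j : ℝ) ^ (p - 1)) atTop (𝓝 1) :=
    hf.comp hI_top
  have hB : Tendsto (fun j : ℕ => g (j - I j) / ((j - I j : ℕ) : ℝ) ^ (q - 1)) atTop (𝓝 1) :=
    hg.comp hJI_top
  have hC : Tendsto (fun j : ℕ => ((I j : ℝ)/j) ^ (p-1)) atTop (𝓝 (x ^ (p-1))) :=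
    ((Real.continuousAt_rpow_const x (p-1) (Or.inl hx0.ne')).tendsto).comp hratio
  have hD : Tendsto (fun j : ℕ => (((j - I j : ℕ) : ℝ)/j) ^ (q-1)) atTop
      (𝓝 ((1-x) ^ (q-1))) :=
    ((Real.continuousAt_rpow_const (1-x) (q-1) (Or.inl (by linarith))).tendsto).comp hratio2
  have hmain := ((hA.mul hB).mul hC).mul hD
  rw [show (1:ℝ) * 1 * x ^ (p-1) * (1-x) ^ (q-1) = x ^ (p-1) * (1-x) ^ (q-1) by ring] at hmain
  refine hmain.congr' ?_
  filter_upwards [hev] with j hj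
  obtain ⟨h1, h2⟩ := hj
  have hb1 : 1 ≤ j - I j := by omega
  have hIne : ((I j : ℝ)) ^ (p-1) ≠ 0 :=
    (Real.rpow_pos_of_pos (by exact_mod_cast h1) _).ne'
  have hbne : (((j - I j : ℕ) : ℝ)) ^ (q-1) ≠ 0 :=
    (Real.rpow_pos_of_pos (by exact_mod_cast hb1) _).ne'
  have key := rpow_split p q h1 h2
  have e1 : f (I j) / (I j:ℝ) ^ (p-1) * (I j:ℝ) ^ (p-1) = f (I j) := div_mul_cancel₀ _ hIne
  have e2 : g (j - I j) / ((j - I j : ℕ):ℝ) ^ (q-1) * ((j - I j : ℕ):ℝ) ^ (q-1) = g (j - I j) :=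
    div_mul_cancel₀ _ hbne
  rw [if_pos h2]
  calc f (I j) / (I j:ℝ) ^ (p-1) * (g (j - I j) / ((j - I j:ℕ):ℝ) ^ (q-1)) *
        ((I j:ℝ)/j) ^ (p-1) * (((j - I j:ℕ):ℝ)/j) ^ (q-1)
      = (f (I j) / (I j:ℝ) ^ (p-1) * (I j:ℝ) ^ (p-1)) *
        (g (j - I j) / ((j - I j:ℕ):ℝ) ^ (q-1) * ((j - I j:ℕ):ℝ) ^ (q-1)) *
        (j:ℝ) ^ (2-p-q) := by
          linear_combination (-(f (I j) / (I j:ℝ) ^ (p-1) *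
            (g (j - I j) / ((j - I j:ℕ):ℝ) ^ (q-1)))) * key
    _ = (j:ℝ) ^ (2-p-q) * (f (I j) * g (j - I j)) := by rw [e1, e2]; ring

/-- the Cauchy-convolution asymptotic: if `f(i) ~ i^{p-1}` and
`g(i) ~ i^{q-1}` with `0 < p, q < 1`, then
`j^{1-p-q} ∑_{i=1}^{j-1} f(i) g(j-i) → B(p, q)`. -/
theorem stmt_7 (p q : ℝ) (hp0 : 0 < p) (hp1 : p < 1) (hq0 : 0 < q) (hq1 : q < 1)
    (f g : ℕ → ℝ)
    (hf : Tendsto (fun i : ℕ => f i / (i : ℝ) ^ (p - 1)) atTop (𝓝 1))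
    (hg : Tendsto (fun i : ℕ => g i / (i : ℝ) ^ (q - 1)) atTop (𝓝 1)) :
    Tendsto (fun j : ℕ => (j : ℝ) ^ (1 - p - q) * ∑ i ∈ Finset.Ico 1 j, f i * g (j - i))
      atTop (𝓝 (betaFn p q)) := by
  obtain ⟨Cf, hCf0, hCf⟩ := bound_of_tendsto (p-1) f hf
  obtain ⟨Cg, hCg0, hCg⟩ := bound_of_tendsto (q-1) g hg
  have hmeas : ∀ j : ℕ, AEStronglyMeasurable
      (fun x : ℝ => (j:ℝ) ^ (2 - p - q) *
        (if ⌈(j:ℝ)*x⌉₊ < j then f ⌈(j:ℝ)*x⌉₊ * g (j - ⌈(j:ℝ)*x⌉₊) else 0))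
      (volume.restrict (Set.uIoc (0:ℝ) 1)) := by
    intro j
    have hm : Measurable ((fun i : ℕ => if i < j then f i * g (j - i) else 0) ∘
        (fun x : ℝ => ⌈(j:ℝ)*x⌉₊)) :=
      measurable_from_nat.comp ((measurable_id'.const_mul ((j:ℝ))).nat_ceil)
    exact (measurable_const.mul hm).aestronglyMeasurable
  have hbound : ∀ j : ℕ, ∀ᵐ x : ℝ ∂volume, x ∈ Set.uIoc (0:ℝ) 1 →
      ‖(j:ℝ) ^ (2 - p - q) *
        (if ⌈(j:ℝ)*x⌉₊ < j then f ⌈(j:ℝ)*x⌉₊ * g (j - ⌈(j:ℝ)*x⌉₊) else 0)‖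
      ≤ (Cf * Cg * 2 ^ (1-q)) * (x ^ (p-1) * (1-x) ^ (q-1)) := by
    intro j
    refine MeasureTheory.ae_of_all _ fun x hx => ?_
    rw [Set.uIoc_of_le (by norm_num)] at hx
    exact step_bound p q hp1 hq1 f g Cf Cg hCf0 hCg0 hCf hCg j hx.1 hx.2
  have hlim : ∀ᵐ x : ℝ ∂volume, x ∈ Set.uIoc (0:ℝ) 1 →
      Tendsto (fun j : ℕ => (j:ℝ) ^ (2 - p - q) *
        (if ⌈(j:ℝ)*x⌉₊ < j then f ⌈(j:ℝ)*x⌉₊ * g (j - ⌈(j:ℝ)*x⌉₊) else 0)) atTop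
        (𝓝 (x ^ (p-1) * (1-x) ^ (q-1))) := by
    have hae : ∀ᵐ x : ℝ ∂volume, x ≠ 1 := by
      have hs : {x : ℝ | ¬ x ≠ 1} = {1} := by ext y; simp
      rw [MeasureTheory.ae_iff, hs]
      exact measure_singleton 1
    filter_upwards [hae] with x hx hmem
    rw [Set.uIoc_of_le (by norm_num)] at hmem
    exact step_tendsto p q f g hf hg hmem.1 (lt_of_le_of_ne hmem.2 hx)
  have hDCT := intervalIntegral.tendsto_integral_filter_of_dominated_convergence
    (μ := volume) (a := (0:ℝ)) (b := 1)
    (F := fun (j : ℕ) (x : ℝ) => (j:ℝ) ^ (2 - p - q) *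
        (if ⌈(j:ℝ)*x⌉₊ < j then f ⌈(j:ℝ)*x⌉₊ * g (j - ⌈(j:ℝ)*x⌉₊) else 0))
    (f := fun x : ℝ => x ^ (p-1) * (1-x) ^ (q-1))
    (bound := fun x : ℝ => (Cf * Cg * 2 ^ (1-q)) * (x ^ (p-1) * (1-x) ^ (q-1)))
    (Filter.Eventually.of_forall hmeas)
    (Filter.Eventually.of_forall hbound)
    ((integrable_kernel p q hp0 hp1 hq0 hq1).const_mul _)
    hlim
  rw [beta_integral_eq p q hp0 hq0] at hDCT
  refine hDCT.congr' ?_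
  filter_upwards [eventually_ge_atTop 1] with j hj
  exact (sum_eq_integral p q f g j hj).symm
end

section
/- Let 0 < δ₁, 0 < δ₂ and χ := δ₁ + δ₂ < 1. Then ( B(1−χ, δ₁) − B(1−χ, δ₂) ) · tan(πχ/2) = tan( π(δ₂ − δ₁)/2 ) · ( B(1−χ, δ₁) + B(1−χ, δ₂) ). -/
lemma trig_aux (a b : ℝ) (ha : Real.cos a ≠ 0) (hb : Real.cos b ≠ 0) :
    (Real.sin (a + b) - Real.sin (a - b)) * Real.tan a
      = Real.tan b * (Real.sin (a + b) + Real.sin (a - b)) := by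
  rw [Real.tan_eq_sin_div_cos, Real.tan_eq_sin_div_cos, Real.sin_add, Real.sin_sub]
  field_simp
  ring


/-- the trigonometric Beta-function identity showing that for a one-sided
moving average the phase of Theorem 1 equals `π(δ₂-δ₁)/2` in absolute value. -/
theorem stmt_9 (δ₁ δ₂ : ℝ) (h1 : 0 < δ₁) (h2 : 0 < δ₂) (χ : ℝ) (hχ : χ = δ₁ + δ₂)
    (hχ1 : χ < 1) :
    (betaFn (1 - χ) δ₁ - betaFn (1 - χ) δ₂) * Real.tan (Real.pi * χ / 2)
      = Real.tan (Real.pi * (δ₂ - δ₁) / 2) * (betaFn (1 - χ) δ₁ + betaFn (1 - χ) δ₂) := by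
  have hχ0 : 0 < χ := by rw [hχ]; linarith
  have hd1 : δ₁ < 1 := by linarith [hχ, h2]
  have hd2 : δ₂ < 1 := by linarith [hχ, h1]
  have hpi := Real.pi_pos
  have hs1 : 0 < Real.sin (Real.pi * δ₁) :=
    Real.sin_pos_of_pos_of_lt_pi (by positivity) (by nlinarith)
  have hs2 : 0 < Real.sin (Real.pi * δ₂) :=
    Real.sin_pos_of_pos_of_lt_pi (by positivity) (by nlinarith)
  have hG1 : 0 < Real.Gamma δ₁ := Real.Gamma_pos_of_pos h1
  have hG2 : 0 < Real.Gamma δ₂ := Real.Gamma_pos_of_pos h2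
  have hGχ : 0 < Real.Gamma (1 - χ) := Real.Gamma_pos_of_pos (by linarith)
  set C : ℝ := Real.Gamma (1 - χ) * Real.Gamma δ₁ * Real.Gamma δ₂ / Real.pi with hC
  have hB1 : betaFn (1 - χ) δ₁ = C * Real.sin (Real.pi * δ₂) := by
    have key := Real.Gamma_mul_Gamma_one_sub δ₂
    have harg : 1 - χ + δ₁ = 1 - δ₂ := by rw [hχ]; ring
    rw [betaFn, harg, hC]
    have hG1δ2 : Real.Gamma (1 - δ₂) = Real.pi / (Real.sin (Real.pi * δ₂) * Real.Gamma δ₂) := by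
      field_simp at key ⊢
      nlinarith [key]
    rw [hG1δ2]
    field_simp
  have hB2 : betaFn (1 - χ) δ₂ = C * Real.sin (Real.pi * δ₁) := by
    have key := Real.Gamma_mul_Gamma_one_sub δ₁
    have harg : 1 - χ + δ₂ = 1 - δ₁ := by rw [hχ]; ring
    rw [betaFn, harg, hC]
    have hG1δ1 : Real.Gamma (1 - δ₁) = Real.pi / (Real.sin (Real.pi * δ₁) * Real.Gamma δ₁) := by
      field_simp at key ⊢
      nlinarith [key]
    rw [hG1δ1]
    field_simp
  set a : ℝ := Real.pi * χ / 2 with ha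
  set b : ℝ := Real.pi * (δ₂ - δ₁) / 2 with hb
  have hab1 : Real.pi * δ₂ = a + b := by rw [ha, hb, hχ]; ring
  have hab2 : Real.pi * δ₁ = a - b := by rw [ha, hb, hχ]; ring
  have hcosa : Real.cos a ≠ 0 := by
    apply ne_of_gt
    apply Real.cos_pos_of_mem_Ioo
    constructor <;> [nlinarith; nlinarith]
  have hcosb : Real.cos b ≠ 0 := by
    apply ne_of_gt
    apply Real.cos_pos_of_mem_Ioo
    constructor <;> [nlinarith; nlinarith]
  have key := trig_aux a b hcosa hcosb
  rw [hB1, hB2, hab1, hab2]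
  linear_combination C * key
end

section
/- Let 0 < ε ≤ 1 and let x be a real number with x > −1 and |x| ≥ ε. Then x − log(1+x) ≥ ε²/6. -/
private lemma hasDeriv_log1p {x : ℝ} (hx : -1 < x) :
    HasDerivAt (fun y : ℝ => Real.log (1 + y)) (1 / (1 + x)) x := by
  have h1 : HasDerivAt (fun y : ℝ => 1 + y) 1 x := by
    simpa using (hasDerivAt_id x).const_add 1
  have h2 := (Real.hasDerivAt_log (by linarith : (1:ℝ) + x ≠ 0)).comp x h1
  rw [mul_one, ← one_div] at h2
  exact h2

private lemma cont_log1p {s : Set ℝ} (hs : ∀ y ∈ s, -1 < y) :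
    ContinuousOn (fun y : ℝ => Real.log (1 + y)) s :=
  Real.continuousOn_log.comp (continuous_const.add continuous_id).continuousOn
    (fun y hy h => by simp only [Set.mem_singleton_iff] at h; linarith [hs y hy])

private lemma neg_case {x : ℝ} (hx : -1 < x) (hx0 : x ≤ 0) :
    x ^ 2 / 2 ≤ x - Real.log (1 + x) := by
  set g : ℝ → ℝ := fun y => y - Real.log (1 + y) - y ^ 2 / 2 with hg
  have hD : ∀ y ∈ Set.Ioo (-1 : ℝ) 0, HasDerivAt g (1 - 1 / (1 + y) - y) y := by
    intro y hy
    exact ((hasDerivAt_id y).sub (hasDeriv_log1p (by linarith [hy.1]))).sub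
      (by simpa using ((hasDerivAt_id y).pow 2).div_const 2)
  have key : AntitoneOn g (Set.Ioc (-1 : ℝ) 0) := by
    have hint : interior (Set.Ioc (-1 : ℝ) 0) = Set.Ioo (-1) 0 := interior_Ioc
    apply antitoneOn_of_deriv_nonpos (convex_Ioc _ _)
    · apply ContinuousOn.sub
      · exact continuousOn_id.sub (cont_log1p (fun y hy => hy.1))
      · exact (continuousOn_id.pow 2).div_const 2
    · rw [hint]
      exact fun y hy => (hD y hy).differentiableAt.differentiableWithinAt
    · rw [hint]
      intro y hy
      rw [(hD y hy).deriv]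
      have h1y : 0 < 1 + y := by linarith [hy.1]
      rw [sub_nonpos, ← sub_nonneg]
      have : y - (1 - 1 / (1 + y)) = y ^ 2 / (1 + y) := by field_simp; ring
      rw [this]
      positivity
  have h0 : g 0 = 0 := by simp [hg]
  have := key (Set.mem_Ioc.mpr ⟨hx, hx0⟩) (Set.mem_Ioc.mpr ⟨by norm_num, le_refl 0⟩) hx0
  rw [h0] at this
  simp only [hg] at this
  linarith

private lemma f_mono : MonotoneOn (fun y : ℝ => y - Real.log (1 + y)) (Set.Ici (0 : ℝ)) := by
  have hD : ∀ y ∈ Set.Ioi (0 : ℝ),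
      HasDerivAt (fun y : ℝ => y - Real.log (1 + y)) (1 - 1 / (1 + y)) y := by
    intro y hy
    exact (hasDerivAt_id y).sub (hasDeriv_log1p (by linarith [Set.mem_Ioi.mp hy]))
  apply monotoneOn_of_deriv_nonneg (convex_Ici _)
  · exact continuousOn_id.sub (cont_log1p (fun y hy => by linarith [Set.mem_Ici.mp hy]))
  · rw [interior_Ici]
    exact fun y hy => (hD y hy).differentiableAt.differentiableWithinAt
  · rw [interior_Ici]
    intro y hy
    have hy' := Set.mem_Ioi.mp hy
    rw [(hD y hy).deriv, sub_nonneg, div_le_one (by linarith)]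
    linarith

private lemma cubic_bound {x : ℝ} (hx0 : 0 ≤ x) :
    x ^ 2 / 2 - x ^ 3 / 3 ≤ x - Real.log (1 + x) := by
  set k : ℝ → ℝ := fun y => y - Real.log (1 + y) - (y ^ 2 / 2 - y ^ 3 / 3) with hk
  have hD : ∀ y ∈ Set.Ioi (0 : ℝ), HasDerivAt k (1 - 1 / (1 + y) - (y - y ^ 2)) y := by
    intro y hy
    have hy' := Set.mem_Ioi.mp hy
    have h1 : HasDerivAt (fun y : ℝ => y ^ 2 / 2 - y ^ 3 / 3) (y - y ^ 2) y := by
      have := (((hasDerivAt_id y).pow 2).div_const 2).sub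
        (((hasDerivAt_id y).pow 3).div_const 3)
      have e : y - y ^ 2 = (2:ℕ) * id y ^ (2 - 1) * 1 / 2 - (3:ℕ) * id y ^ (3 - 1) * 1 / 3 := by
        norm_num
      rw [e]; exact this
    exact ((hasDerivAt_id y).sub (hasDeriv_log1p (by linarith))).sub h1
  have key : MonotoneOn k (Set.Ici (0 : ℝ)) := by
    apply monotoneOn_of_deriv_nonneg (convex_Ici _)
    · apply ContinuousOn.sub
      · exact continuousOn_id.sub (cont_log1p (fun y hy => by linarith [Set.mem_Ici.mp hy]))
      · exact ((continuousOn_id.pow 2).div_const 2).sub ((continuousOn_id.pow 3).div_const 3)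
    · rw [interior_Ici]
      exact fun y hy => (hD y hy).differentiableAt.differentiableWithinAt
    · rw [interior_Ici]
      intro y hy
      have hy' := Set.mem_Ioi.mp hy
      rw [(hD y hy).deriv]
      have h1y : 0 < 1 + y := by linarith
      rw [← sub_nonneg]
      have : 1 - 1 / (1 + y) - (y - y ^ 2) - (0:ℝ) = y ^ 3 / (1 + y) := by
        field_simp; ring
      rw [this]
      positivity
  have h0 : k 0 = 0 := by simp [hk]
  have := key (Set.mem_Ici.mpr (le_refl (0:ℝ))) (Set.mem_Ici.mpr hx0) hx0
  rw [h0] at this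
  simp only [hk] at this
  linarith

/-- For `0 < ε ≤ 1` and real `x` with `x > -1` and `|x| ≥ ε`,
`x - log(1+x) ≥ ε²/6`. (First inequality of display (7.9).) -/
theorem stmt_11 (ε x : ℝ) (hε0 : 0 < ε) (hε1 : ε ≤ 1) (hx : -1 < x) (hxε : ε ≤ |x|) :
    ε ^ 2 / 6 ≤ x - Real.log (1 + x) := by
  rcases le_or_gt 0 x with h | h
  · rw [abs_of_nonneg h] at hxε
    have hmono := f_mono (Set.mem_Ici.mpr hε0.le) (Set.mem_Ici.mpr (hε0.le.trans hxε)) hxε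
    have hcb := cubic_bound hε0.le
    have hcube : ε ^ 3 ≤ ε ^ 2 := by nlinarith
    simp only at hmono
    linarith
  · rw [abs_of_neg h] at hxε
    have := neg_case hx (by linarith)
    nlinarith
end

section
/- Let ρ, c, τ be real numbers with ρ² < 1 and 0 < c ≤ 1. Then log( (1 − ρ² c cos²τ) / (1 − ρ²) ) ≥ ρ² sin²τ. -/
/-- `log((1 - ρ² c cos²τ)/(1 - ρ²)) ≥ ρ² sin²τ` for `ρ² < 1`, `0 < c ≤ 1`;
the lower bound for the log-determinant ratio in display (7.11). -/
theorem stmt_13 (ρ c τ : ℝ) (hρ : ρ ^ 2 < 1) (hc0 : 0 < c) (hc1 : c ≤ 1) :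
    ρ ^ 2 * Real.sin τ ^ 2
      ≤ Real.log ((1 - ρ ^ 2 * c * Real.cos τ ^ 2) / (1 - ρ ^ 2)) := by
  have hd : (0:ℝ) < 1 - ρ ^ 2 := by linarith
  have hcos : (0:ℝ) ≤ ρ ^ 2 * Real.cos τ ^ 2 := by positivity
  have hcos1 : Real.cos τ ^ 2 ≤ 1 := by
    nlinarith [Real.sin_sq_add_cos_sq τ, sq_nonneg (Real.sin τ)]
  have hA : (0:ℝ) < 1 - ρ ^ 2 * Real.cos τ ^ 2 := by nlinarith
  have hA1 : 1 - ρ ^ 2 * Real.cos τ ^ 2 ≤ 1 := by nlinarith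
  have hnum : 1 - ρ ^ 2 * Real.cos τ ^ 2 ≤ 1 - ρ ^ 2 * c * Real.cos τ ^ 2 := by
    nlinarith [sq_nonneg ρ, sq_nonneg (Real.cos τ)]
  set A := 1 - ρ ^ 2 * Real.cos τ ^ 2 with hAdef
  have hmono : Real.log (A / (1 - ρ ^ 2))
      ≤ Real.log ((1 - ρ ^ 2 * c * Real.cos τ ^ 2) / (1 - ρ ^ 2)) := by
    apply Real.log_le_log (by positivity)
    gcongr
  refine le_trans ?_ hmono
  -- log(A/(1-ρ²)) ≥ 1 - (1-ρ²)/A = ρ² sin²τ / A ≥ ρ² sin²τ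
  have hx : (0:ℝ) < A / (1 - ρ ^ 2) := by positivity
  have hlog : Real.log ((A / (1 - ρ ^ 2))⁻¹) ≤ (A / (1 - ρ ^ 2))⁻¹ - 1 :=
    Real.log_le_sub_one_of_pos (by positivity)
  rw [Real.log_inv] at hlog
  have hinv : (A / (1 - ρ ^ 2))⁻¹ = (1 - ρ ^ 2) / A := by
    rw [inv_div]
  rw [hinv] at hlog
  have h1 : 1 - (1 - ρ ^ 2) / A ≤ Real.log (A / (1 - ρ ^ 2)) := by linarith
  refine le_trans ?_ h1
  have hsin : ρ ^ 2 * Real.sin τ ^ 2 = A - (1 - ρ ^ 2) := by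
    have := Real.sin_sq_add_cos_sq τ
    simp only [hAdef]; nlinarith
  have : 1 - (1 - ρ ^ 2) / A = (A - (1 - ρ ^ 2)) / A := by
    field_simp
  rw [this, ← hsin]
  rw [le_div_iff₀ hA]
  nlinarith [mul_nonneg (sq_nonneg ρ) (sq_nonneg (Real.sin τ))]
end
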